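/- Internal steps never create normal forms (Call-by-Name): for all λ-terms U and N, if U ⋫ N (i.e. U →β N but not U ⊳ N), then N is not β-normal. -/
import Mathlib


/-- Untyped λ-terms in de Bruijn representation. -/
inductive Tm : Type
  | var : ℕ → Tm
  | lam : Tm → Tm
  | app : Tm → Tm → Tm
deriving DecidableEq

namespace Tm

/-- Lift (shift by one) the free variables of index `≥ d`. -/
def lift (d : ℕ) : Tm → Tm
  | var n => if n < d then var n else var (n + 1)
  | lam M => lam (lift (d + 1) M)
  | app M N => app (lift d M) (lift d N)

/-- Capture-avoiding substitution `M[N/k]` of `N` for the free variable `k` in `M`. -/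
def subst : Tm → ℕ → Tm → Tm
  | var n, k, N => if n = k then N else if k < n then var (n - 1) else var n
  | lam M, k, N => lam (subst M (k + 1) (lift 0 N))
  | app M₁ M₂, k, N => app (subst M₁ k N) (subst M₂ k N)

end Tm

/-- β-reduction: the closure of the root rule `(λx.M)N ↦β M[N/x]` under arbitrary contexts. -/
inductive Beta : Tm → Tm → Prop
  | beta (M N : Tm) : Beta (Tm.app (Tm.lam M) N) (M.subst 0 N)
  | lam {M M'} : Beta M M' → Beta (Tm.lam M) (Tm.lam M')
  | appL {M M' N} : Beta M M' → Beta (Tm.app M N) (Tm.app M' N)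
  | appR {M N N'} : Beta N N' → Beta (Tm.app M N) (Tm.app M N')

/-- Head reduction: the closure of `↦β` under head contexts `H ::= ⟨⟩ | λx.H | H M`. -/
inductive Head : Tm → Tm → Prop
  | beta (M N : Tm) : Head (Tm.app (Tm.lam M) N) (M.subst 0 N)
  | lam {M M'} : Head M M' → Head (Tm.lam M) (Tm.lam M')
  | appL {M M' N} : Head M M' → Head (Tm.app M N) (Tm.app M' N)

/-- The unbiased strategy `⊳`: perform head steps as long as possible; once the term has
no head redex, iterate in the subterms (in arbitrary order). -/
inductive Unb : Tm → Tm → Prop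
  | head {M M'} : Head M M' → Unb M M'
  | lam {P P'} : (∀ s, ¬ Head (Tm.lam P) s) → Unb P P' → Unb (Tm.lam P) (Tm.lam P')
  | appL {P P' Q} : (∀ s, ¬ Head (Tm.app P Q) s) → Unb P P' →
      Unb (Tm.app P Q) (Tm.app P' Q)
  | appR {P Q Q'} : (∀ s, ¬ Head (Tm.app P Q) s) → Unb Q Q' →
      Unb (Tm.app P Q) (Tm.app P Q')

/-- `M` is β-normal: it has no `→β`-successor. -/
def BetaNormal (M : Tm) : Prop := ∀ N, ¬ Beta M N


lemma head_beta {M M' : Tm} (h : Head M M') : Beta M M' := by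
  induction h with
  | beta M N => exact Beta.beta M N
  | lam _ ih => exact Beta.lam ih
  | appL _ ih => exact Beta.appL ih

/-- Internal steps preserve head redexes. -/
lemma head_preserved {M M' : Tm} (hb : Beta M M') :
    ∀ s, Head M s → Head M M' ∨ ∃ t, Head M' t := by
  induction hb with
  | beta P Q => intro s _; exact Or.inl (Head.beta P Q)
  | lam hPP' ih =>
      intro s hs
      cases hs with
      | lam h =>
        rcases ih _ h with h' | ⟨t, ht⟩
        · exact Or.inl (Head.lam h')
        · exact Or.inr ⟨_, Head.lam ht⟩
  | @appL P P' Q hPP' ih =>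
      intro s hs
      cases hs with
      | beta R Q =>
          cases hPP' with
          | lam h => exact Or.inr ⟨_, Head.beta _ _⟩
      | appL h =>
        rcases ih _ h with h' | ⟨t, ht⟩
        · exact Or.inl (Head.appL h')
        · exact Or.inr ⟨_, Head.appL ht⟩
  | @appR P Q Q' hQQ' ih =>
      intro s hs
      cases hs with
      | beta R Q => exact Or.inr ⟨_, Head.beta _ _⟩
      | appL h => exact Or.inr ⟨_, Head.appL h⟩

/-- **Internal steps never create normal forms (Call-by-Name)**: if `U ⋫ N`
(i.e. `U →β N` but not `U ⊳ N`), then `N` is not β-normal. -/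
theorem cbn_internal_not_normal (U N : Tm) (hstep : Beta U N) (hnotunb : ¬ Unb U N) :
    ¬ BetaNormal N := by
  induction hstep with
  | beta M N => exact absurd (Unb.head (Head.beta M N)) hnotunb
  | @lam M M' hMM' ih =>
      intro hnorm
      by_cases hh : ∃ s, Head M s
      · obtain ⟨s, hs⟩ := hh
        rcases head_preserved hMM' s hs with h' | ⟨t, ht⟩
        · exact hnotunb (Unb.head (Head.lam h'))
        · exact hnorm _ (Beta.lam (head_beta ht))
      · push_neg at hh
        have hnu : ¬ Unb M M' := fun hu =>
          hnotunb (Unb.lam (fun s hs => by cases hs with | lam h => exact hh _ h) hu)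
        have := ih hnu
        rw [BetaNormal] at this
        push_neg at this
        obtain ⟨t, ht⟩ := this
        exact hnorm _ (Beta.lam ht)
  | @appL M M' Q hMM' ih =>
      intro hnorm
      by_cases hh : ∃ s, Head (Tm.app M Q) s
      · obtain ⟨s, hs⟩ := hh
        rcases head_preserved (Beta.appL hMM' (N := Q)) s hs with h' | ⟨t, ht⟩
        · exact hnotunb (Unb.head h')
        · exact hnorm _ (head_beta ht)
      · push_neg at hh
        have hnu : ¬ Unb M M' := fun hu => hnotunb (Unb.appL hh hu)
        have := ih hnu
        rw [BetaNormal] at this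
        push_neg at this
        obtain ⟨t, ht⟩ := this
        exact hnorm _ (Beta.appL ht)
  | @appR M Q Q' hQQ' ih =>
      intro hnorm
      by_cases hh : ∃ s, Head (Tm.app M Q) s
      · obtain ⟨s, hs⟩ := hh
        rcases head_preserved (Beta.appR hQQ' (M := M)) s hs with h' | ⟨t, ht⟩
        · exact hnotunb (Unb.head h')
        · exact hnorm _ (head_beta ht)
      · push_neg at hh
        have hnu : ¬ Unb Q Q' := fun hu => hnotunb (Unb.appR hh hu)
        have := ih hnu
        rw [BetaNormal] at this
        push_neg at this
        obtain ⟨t, ht⟩ := this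
        exact hnorm _ (Beta.appR ht)
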